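/- Let g ∈ SL_N(A((t))) with g ∉ SL_N(A[[t]]) and with index r(g) = m/n written in lowest terms, and let M ≥ 1 be an integer. Then for every integer m' ≥ m + M, every entry of the matrix ι_n(g)⁻¹ · σ_{m',n}(g) − I lies in s^M · (A[u])[[s]]. -/

import Mathlib

/-!
Setup for indices and residues of elements of `SL_N(A((t)))`, following
Florence–Gille, "Residues on affine grassmannians".

* `mkL` builds a Laurent series from a coefficient function (junk `0` if the support is
  not well ordered; in all uses the support is bounded below).
* `subst φ w` is the substitution map `A((t)) → B((s))`, `∑ aᵢ tⁱ ↦ ∑ φ(aᵢ) wⁱ`,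
  computed coefficientwise.
* `SigmaSet g` is the set `Σ(g)` of the paper.
-/

noncomputable section

open Polynomial HahnSeries

namespace ResidueIndex

variable {A : Type*} [CommRing A] {B : Type*} [CommRing B] {N : ℕ}

/-- Build a Laurent series from a coefficient function (junk value `0` if the support is
not partially well ordered; in all uses below the support is bounded below, so this is
the Laurent series with the given coefficients). -/
def mkL (f : ℤ → B) : LaurentSeries B :=
  letI := Classical.dec ((Function.support f).IsPWO)
  if h : (Function.support f).IsPWO then ⟨f, h⟩ else 0

/-- Total integer power in `B((s))`: the genuine `z ^ i` for `i ≥ 0`, and `(z⁻¹) ^ (-i)`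
(via `Ring.inverse`) for `i < 0`; meaningful whenever `z` is a unit. -/
def zpow' (z : LaurentSeries B) (i : ℤ) : LaurentSeries B :=
  if 0 ≤ i then z ^ i.toNat else Ring.inverse z ^ (-i).toNat

/-- The substitution map `A((t)) → B((s))` determined by the coefficient homomorphism
`φ : A → B` and `t ↦ w`: it sends `∑ aᵢ tⁱ` to `∑ φ(aᵢ) wⁱ` (computed coefficientwise). -/
def subst (φ : A →+* B) (w : LaurentSeries B) (x : LaurentSeries A) : LaurentSeries B :=
  mkL fun k => ∑ᶠ i : ℤ, φ (x.coeff i) * (zpow' w i).coeff k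

/-- `x` lies in the power series subring `B[[t]] ⊆ B((t))`. -/
def IsPS (x : LaurentSeries B) : Prop := ∀ i : ℤ, i < 0 → x.coeff i = 0

variable (A) in
/-- `ι_n : A((t)) → (A[u])((s))`: inclusion on coefficients, `t ↦ sⁿ`. -/
def iotaF (n : ℕ) : LaurentSeries A → LaurentSeries (Polynomial A) :=
  subst (Polynomial.C) (HahnSeries.single (n : ℤ) 1)

variable (A) in
/-- `σ_{m,n} : A((t)) → (A[u])((s))`: inclusion on coefficients,
`t ↦ sⁿ(1 + u sᵐ) = sⁿ + u s^{n+m}`. -/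
def sigmaF (m n : ℕ) : LaurentSeries A → LaurentSeries (Polynomial A) :=
  subst (Polynomial.C)
    (HahnSeries.single (n : ℤ) 1 + HahnSeries.single ((n : ℤ) + (m : ℤ)) Polynomial.X)

/-- The matrix `ι_n(g)⁻¹ · σ_{m,n}(g)` (the matrix inverse is the nonsingular inverse,
which is the genuine inverse since `det (ι_n(g)) = 1`). -/
def hmat (g : Matrix (Fin N) (Fin N) (LaurentSeries A)) (m n : ℕ) :
    Matrix (Fin N) (Fin N) (LaurentSeries (Polynomial A)) :=
  (g.map (iotaF A n))⁻¹ * g.map (sigmaF A m n)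

/-- `Σ(g)`: the set of positive rationals `r = m/n` (written in lowest terms) such that
all entries of `ι_n(g)⁻¹ σ_{m,n}(g)` are power series. -/
def SigmaSet (g : Matrix (Fin N) (Fin N) (LaurentSeries A)) : Set ℚ :=
  {r : ℚ | 0 < r ∧ ∀ i j, IsPS (hmat g r.num.toNat r.den i j)}

variable (A) in
/-- `ι : A((t)) → (A[λ,λ⁻¹])((t))`: inclusion on coefficients, `t ↦ t`. -/
def iotaL : LaurentSeries A → LaurentSeries (LaurentPolynomial A) :=
  subst (LaurentPolynomial.C) (HahnSeries.single (1 : ℤ) 1)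

variable (A) in
/-- `σ₀ : A((t)) → (A[λ,λ⁻¹])((t))`: inclusion on coefficients, `t ↦ λt`. -/
def sigmaL : LaurentSeries A → LaurentSeries (LaurentPolynomial A) :=
  subst (LaurentPolynomial.C) (HahnSeries.single (1 : ℤ) (LaurentPolynomial.T 1))

/-- The matrix `ι(g)⁻¹ · σ₀(g)`. -/
def lmat (g : Matrix (Fin N) (Fin N) (LaurentSeries A)) :
    Matrix (Fin N) (Fin N) (LaurentSeries (LaurentPolynomial A)) :=
  (g.map (iotaL A))⁻¹ * g.map (sigmaL A)

/-- The coefficientwise base change `A((t)) → B((t))` along `φ : A → B` (`t ↦ t`). -/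
def baseF (φ : A →+* B) : LaurentSeries A → LaurentSeries B :=
  subst φ (HahnSeries.single (1 : ℤ) 1)

variable (A) in
/-- `φ_d : A((t)) → A((t))`, fixing `A` and sending `t` to `t^d`. -/
def phiD (d : ℕ) : LaurentSeries A → LaurentSeries A :=
  subst (RingHom.id A) (HahnSeries.single (d : ℤ) 1)

/-- Constant term (evaluation at `t = 0`) applied entrywise to a matrix of Laurent
series; this is the map `j` when the entries are power series. -/
def jmat (M : Matrix (Fin N) (Fin N) (LaurentSeries B)) : Matrix (Fin N) (Fin N) B :=
  Matrix.of fun i j => (M i j).coeff 0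

/-- The matrix `ι_n(g)⁻¹ · σ_f(g)` for a general substitution `σ_f : t ↦ f`,
`f ∈ (A[u])[[s]]`. -/
def hmatF (g : Matrix (Fin N) (Fin N) (LaurentSeries A)) (n : ℕ)
    (f : PowerSeries (Polynomial A)) :
    Matrix (Fin N) (Fin N) (LaurentSeries (Polynomial A)) :=
  (g.map (iotaF A n))⁻¹ *
    g.map (subst Polynomial.C ((HahnSeries.ofPowerSeries ℤ (Polynomial A)) f))

variable (N) in
/-- Membership in the closed subgroup scheme `G ⊆ SL_N` cut out by the set `S` of
polynomials in the matrix entries, at the commutative `A`-algebra `B`. -/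
def Gmem (S : Set (MvPolynomial (Fin N × Fin N) A)) (B : Type*) [CommRing B] [Algebra A B]
    (M : Matrix (Fin N) (Fin N) B) : Prop :=
  M.det = 1 ∧ ∀ p ∈ S, MvPolynomial.aeval (fun q : Fin N × Fin N => M q.1 q.2) p = 0

/-- `M = M(u) ∈ SL_N(A[u])` satisfies `M(X+Y) = M(X)·M(Y)` in `SL_N(A[X,Y])`
(with `A[X,Y] = MvPolynomial (Fin 2) A`); i.e. `M` is a homomorphism `𝔾_a → SL_N`. -/
def IsAddHomMat (M : Matrix (Fin N) (Fin N) (Polynomial A)) : Prop :=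
  M.map ⇑(Polynomial.aeval (MvPolynomial.X 0 + MvPolynomial.X 1 : MvPolynomial (Fin 2) A))
    = M.map ⇑(Polynomial.aeval (MvPolynomial.X 0 : MvPolynomial (Fin 2) A))
      * M.map ⇑(Polynomial.aeval (MvPolynomial.X 1 : MvPolynomial (Fin 2) A))

/-- The `A`-algebra map `A[λ,λ⁻¹] → D` sending `λ` to the unit `u`. -/
def lpHom {D : Type*} [CommRing D] [Algebra A D] (u : Dˣ) : LaurentPolynomial A →ₐ[A] D :=
  (AddMonoidAlgebra.lift A D ℤ) ((Units.coeHom D).comp (zpowersHom Dˣ u))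

variable (A) in
/-- The unit `λ` of `A[λ^{±1}, μ^{±1}] = (A[μ,μ⁻¹])[λ,λ⁻¹]`. -/
def unitLam : (LaurentPolynomial (LaurentPolynomial A))ˣ :=
  (LaurentPolynomial.isUnit_T 1).unit

variable (A) in
/-- The unit `μ` of `A[λ^{±1}, μ^{±1}] = (A[μ,μ⁻¹])[λ,λ⁻¹]`. -/
def unitMu : (LaurentPolynomial (LaurentPolynomial A))ˣ :=
  Units.map (LaurentPolynomial.C (R := LaurentPolynomial A)).toMonoidHom
    (LaurentPolynomial.isUnit_T 1).unit

/-- `M = M(λ) ∈ SL_N(A[λ,λ⁻¹])` satisfies `M(λμ) = M(λ)·M(μ)` in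
`SL_N(A[λ^{±1},μ^{±1}])`; i.e. `M` is a homomorphism `𝔾_m → SL_N`. -/
def IsMulHomMat (M : Matrix (Fin N) (Fin N) (LaurentPolynomial A)) : Prop :=
  M.map ⇑(lpHom (unitLam A * unitMu A))
    = M.map ⇑(lpHom (unitLam A)) * M.map ⇑(lpHom (unitMu A))

/-- Composition (substitution) of formal power series: `pcomp f h = f ∘ h`, the series
obtained by substituting `h` for `t` in `f`; meaningful when `h` has zero constant
coefficient. -/
def pcomp (f h : PowerSeries B) : PowerSeries B :=
  PowerSeries.mk fun k =>
    ∑ i ∈ Finset.range (k + 1), PowerSeries.coeff i f * PowerSeries.coeff k (h ^ i)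

variable (B) in
/-- `J^w(B) = {f ∈ B[[t]] : f ≡ t (mod t^{w+1})}`. -/
def Jset (w : ℕ) : Set (PowerSeries B) :=
  {f | ∀ k : ℕ, k ≤ w → PowerSeries.coeff k f = PowerSeries.coeff k PowerSeries.X}

/-! ### Auxiliary material for the proof of Statement 4 -/

section Statement4Aux

variable {R : Type*} [CommRing R] {S : Type*} [CommRing S]

lemma isPWO_of_bddBelow (s : Set ℤ) (hs : BddBelow s) : s.IsPWO :=
  Set.IsWF.isPWO hs.wellFoundedOn_lt

lemma mkL_coeff {f : ℤ → R} (h : (Function.support f).IsPWO) : (mkL f).coeff = f := by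
  unfold mkL
  rw [dif_pos h]

lemma mkL_eq {f : ℤ → R} {H : LaurentSeries R} (h : ∀ k, f k = H.coeff k) : mkL f = H := by
  have hf : f = H.coeff := funext h
  subst hf
  exact HahnSeries.coeff_inj.mp (mkL_coeff H.isPWO_support)

/-- `x` has coefficients vanishing below `a`. -/
def VBelow (x : LaurentSeries R) (a : ℤ) : Prop := ∀ k : ℤ, k < a → x.coeff k = 0

lemma VBelow.one : VBelow (1 : LaurentSeries R) 0 := fun k hk => by
  rw [HahnSeries.coeff_one, if_neg (by omega)]

lemma VBelow.mul {x y : LaurentSeries R} {a b : ℤ} (hx : VBelow x a) (hy : VBelow y b) :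
    VBelow (x * y) (a + b) := by
  intro k hk
  rw [HahnSeries.coeff_mul]
  refine Finset.sum_eq_zero fun ij hij => ?_
  rw [Finset.mem_addAntidiagonal] at hij
  have h1 : a ≤ ij.1 := by
    by_contra h
    exact hij.1 (hx _ (lt_of_not_ge h))
  have h2 : b ≤ ij.2 := by
    by_contra h
    exact hij.2.1 (hy _ (lt_of_not_ge h))
  have : a + b ≤ k := by
    rw [← hij.2.2]; exact add_le_add h1 h2
  omega

lemma VBelow.pow {x : LaurentSeries R} {a : ℤ} (hx : VBelow x a) (j : ℕ) :
    VBelow (x ^ j) ((j : ℤ) * a) := by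
  induction j with
  | zero => simpa using VBelow.one
  | succ j ih =>
      intro k hk
      rw [pow_succ]
      refine (ih.mul hx) k ?_
      push_cast at hk ⊢
      linarith

/-- The geometric series `∑_{j ≥ 0} r^j t^{j m}`, inverse of `1 - r t^m`. -/
def geo (m : ℤ) (r : R) : LaurentSeries R :=
  mkL fun k => if 0 ≤ k ∧ m ∣ k then r ^ (k / m).toNat else 0

lemma geo_coeff (m : ℤ) (r : R) (k : ℤ) :
    (geo m r).coeff k = if 0 ≤ k ∧ m ∣ k then r ^ (k / m).toNat else 0 := by
  unfold geo
  rw [mkL_coeff]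
  apply isPWO_of_bddBelow
  refine ⟨0, fun k' hk' => ?_⟩
  rw [Function.mem_support] at hk'
  by_contra h
  exact hk' (if_neg (fun hc => h hc.1))

lemma one_sub_single_mul_geo {m : ℤ} (hm : 1 ≤ m) (r : R) :
    (1 - HahnSeries.single m r) * geo m r = 1 := by
  ext k
  rw [sub_mul, one_mul, HahnSeries.coeff_sub]
  have hsm : (HahnSeries.single m r * geo m r).coeff k = r * (geo m r).coeff (k - m) := by
    have := HahnSeries.coeff_single_mul_add (r := r) (x := geo m r) (a := k - m) (b := m)
    rw [sub_add_cancel] at this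
    exact this
  rw [hsm, geo_coeff, geo_coeff, HahnSeries.coeff_one]
  by_cases h0 : k = 0
  · subst h0
    rw [if_pos ⟨le_refl 0, dvd_zero m⟩, if_neg (by omega), if_pos rfl]
    simp
  · rw [if_neg h0]
    by_cases h1 : 0 ≤ k ∧ m ∣ k
    · obtain ⟨c, rfl⟩ := h1.2
      have hc : 0 < c := by
        by_contra hcn
        push_neg at hcn
        have h3 : m * c ≤ 0 := mul_nonpos_iff.mpr (Or.inl ⟨by omega, hcn⟩)
        exact h0 (le_antisymm h3 h1.1)
      have hkm : 0 ≤ m * c - m ∧ m ∣ m * c - m := by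
        constructor
        · nlinarith [mul_le_mul_of_nonneg_left (by omega : (1:ℤ) ≤ c) (by omega : (0:ℤ) ≤ m)]
        · exact ⟨c - 1, by ring⟩
      rw [if_pos h1, if_pos hkm]
      have e1 : m * c / m = c := Int.mul_ediv_cancel_left _ (by omega)
      have e2 : (m * c - m) / m = c - 1 := by
        have : m * c - m = m * (c - 1) := by ring
        rw [this, Int.mul_ediv_cancel_left _ (by omega)]
      rw [e1, e2]
      have e3 : c.toNat = (c - 1).toNat + 1 := by omega
      rw [e3, pow_succ]
      ring
    · rw [if_neg h1]
      have h2 : ¬(0 ≤ k - m ∧ m ∣ k - m) := by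
        rintro ⟨hge, c, hc⟩
        exact h1 ⟨by omega, c + 1, by rw [mul_add, mul_one, ← hc]; ring⟩
      rw [if_neg h2]
      simp

/-- The unit `t^n (1 - r t^m) = t^n - r t^{n+m}` of the Laurent series ring. -/
def wUnit (n m : ℤ) (hm : 1 ≤ m) (r : R) : (LaurentSeries R)ˣ where
  val := HahnSeries.single n 1 - HahnSeries.single (n + m) r
  inv := HahnSeries.single (-n) 1 * geo m r
  val_inv := by
    have hfac : HahnSeries.single n (1 : R) - HahnSeries.single (n + m) r
        = HahnSeries.single n 1 * (1 - HahnSeries.single m r) := by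
      rw [mul_sub, mul_one, HahnSeries.single_mul_single, one_mul]
    rw [hfac]
    calc HahnSeries.single n 1 * (1 - HahnSeries.single m r)
          * (HahnSeries.single (-n) 1 * geo m r)
        = (HahnSeries.single n 1 * HahnSeries.single (-n) 1)
          * ((1 - HahnSeries.single m r) * geo m r) := by ring
      _ = 1 := by
          rw [HahnSeries.single_mul_single, one_mul, add_neg_cancel,
            HahnSeries.single_zero_one, one_sub_single_mul_geo hm, one_mul]
  inv_val := by
    have hfac : HahnSeries.single n (1 : R) - HahnSeries.single (n + m) r
        = HahnSeries.single n 1 * (1 - HahnSeries.single m r) := by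
      rw [mul_sub, mul_one, HahnSeries.single_mul_single, one_mul]
    rw [hfac]
    calc HahnSeries.single (-n) 1 * geo m r
          * (HahnSeries.single n 1 * (1 - HahnSeries.single m r))
        = (HahnSeries.single n 1 * HahnSeries.single (-n) 1)
          * ((1 - HahnSeries.single m r) * geo m r) := by ring
      _ = 1 := by
          rw [HahnSeries.single_mul_single, one_mul, add_neg_cancel,
            HahnSeries.single_zero_one, one_sub_single_mul_geo hm, one_mul]

lemma wUnit_val_vbelow (n m : ℤ) (hm : 1 ≤ m) (r : R) :
    VBelow ((wUnit n m hm r : (LaurentSeries R)ˣ) : LaurentSeries R) n := by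
  intro k hk
  show (HahnSeries.single n (1 : R) - HahnSeries.single (n + m) r).coeff k = 0
  rw [HahnSeries.coeff_sub, HahnSeries.coeff_single, HahnSeries.coeff_single,
    if_neg (by omega), if_neg (by omega), sub_zero]

lemma wUnit_inv_vbelow (n m : ℤ) (hm : 1 ≤ m) (r : R) :
    VBelow ((((wUnit n m hm r)⁻¹ : (LaurentSeries R)ˣ)) : LaurentSeries R) (-n) := by
  intro k hk
  show (HahnSeries.single (-n) (1 : R) * geo m r).coeff k = 0
  have := HahnSeries.coeff_single_mul_add (r := (1 : R)) (x := geo m r) (a := k + n) (b := -n)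
  rw [add_neg_cancel_right] at this
  rw [this, one_mul, geo_coeff, if_neg (by rintro ⟨h, -⟩; omega)]

/-- `w` behaves like an element of exact order `n` with respect to all integer powers. -/
def WG (w : LaurentSeries R) (n : ℤ) : Prop :=
  ∀ i k : ℤ, k < n * i → (zpow' w i).coeff k = 0

lemma wg_of_unit (u : (LaurentSeries R)ˣ) {n : ℤ}
    (h1 : VBelow (u : LaurentSeries R) n)
    (h2 : VBelow ((u⁻¹ : (LaurentSeries R)ˣ) : LaurentSeries R) (-n)) :
    WG (u : LaurentSeries R) n := by
  intro i k hk
  unfold zpow'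
  split_ifs with hi
  · refine h1.pow i.toNat k ?_
    rw [Int.toNat_of_nonneg hi, mul_comm]
    exact hk
  · rw [Ring.inverse_unit]
    refine h2.pow (-i).toNat k ?_
    rw [Int.toNat_of_nonneg (by omega), neg_mul_neg, mul_comm]
    exact hk

/-- `t^n` as a unit. -/
def sUnit (n : ℤ) : (LaurentSeries R)ˣ where
  val := HahnSeries.single n 1
  inv := HahnSeries.single (-n) 1
  val_inv := by
    rw [HahnSeries.single_mul_single, one_mul, add_neg_cancel, HahnSeries.single_zero_one]
  inv_val := by
    rw [HahnSeries.single_mul_single, one_mul, neg_add_cancel, HahnSeries.single_zero_one]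

lemma single_vbelow (n : ℤ) (r : R) : VBelow (HahnSeries.single n r) n := fun k hk => by
  rw [HahnSeries.coeff_single, if_neg (by omega)]

lemma wg_single (n : ℤ) : WG (HahnSeries.single n (1 : R)) n :=
  wg_of_unit (sUnit n) (single_vbelow n 1) (single_vbelow (-n) 1)

variable {A' : Type*} [CommRing A']

lemma subst_support_finite (φ : A' →+* R) {w : LaurentSeries R} {n : ℤ}
    (hn : 1 ≤ n) (hw : WG w n) (x : LaurentSeries A') (k : ℤ) :
    (Function.support fun i : ℤ => φ (x.coeff i) * (zpow' w i).coeff k).Finite := by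
  apply Set.Finite.subset (Set.finite_Icc x.order (max k 0))
  intro i hi
  rw [Function.mem_support] at hi
  have hx1 : x.coeff i ≠ 0 := fun h => hi (by rw [h, map_zero, zero_mul])
  have hz : (zpow' w i).coeff k ≠ 0 := fun h => hi (by rw [h, mul_zero])
  have h1 : x.order ≤ i := HahnSeries.order_le_of_coeff_ne_zero hx1
  have h2 : n * i ≤ k := by
    by_contra h
    exact hz (hw i k (lt_of_not_ge h))
  have h3 : i ≤ max k 0 := by
    rcases le_or_gt 0 i with h4 | h4
    · exact le_max_of_le_left ((le_mul_of_one_le_left h4 hn).trans h2)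
    · exact le_max_of_le_right h4.le
  exact Set.mem_Icc.mpr ⟨h1, h3⟩

lemma subst_coeff (φ : A' →+* R) {w : LaurentSeries R} {n : ℤ}
    (hn : 1 ≤ n) (hw : WG w n) (x : LaurentSeries A') (k : ℤ) :
    (subst φ w x).coeff k = ∑ᶠ i : ℤ, φ (x.coeff i) * (zpow' w i).coeff k := by
  unfold subst
  rw [mkL_coeff]
  apply isPWO_of_bddBelow
  refine ⟨n * x.order, fun k' hk' => ?_⟩
  rw [Function.mem_support] at hk'
  by_contra hb
  push_neg at hb
  apply hk'
  apply finsum_eq_zero_of_forall_eq_zero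
  intro i
  by_cases hxi : x.coeff i = 0
  · rw [hxi, map_zero, zero_mul]
  · have h1 : x.order ≤ i := HahnSeries.order_le_of_coeff_ne_zero hxi
    rw [hw i k' (lt_of_lt_of_le hb (mul_le_mul_of_nonneg_left h1 (by omega))), mul_zero]

lemma zpow'_single (n i : ℤ) :
    zpow' (HahnSeries.single n (1 : R)) i = HahnSeries.single (n * i) 1 := by
  unfold zpow'
  split_ifs with hi
  · rw [HahnSeries.single_pow]
    congr 1
    · rw [nsmul_eq_mul, Int.toNat_of_nonneg hi]; ring
    · exact one_pow _
  · have hinv : Ring.inverse (HahnSeries.single n (1 : R)) = HahnSeries.single (-n) 1 :=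
      Ring.inverse_unit (sUnit n)
    rw [hinv, HahnSeries.single_pow]
    congr 1
    · rw [nsmul_eq_mul, Int.toNat_of_nonneg (by omega : (0:ℤ) ≤ -i)]; ring
    · exact one_pow _

lemma iotaF_coeff {n : ℕ} (hn : 0 < n) (x : LaurentSeries A') (k : ℤ) :
    (iotaF A' n x).coeff k
      = if (n : ℤ) ∣ k then Polynomial.C (x.coeff (k / n)) else 0 := by
  have hn' : (1 : ℤ) ≤ (n : ℤ) := by exact_mod_cast hn
  unfold iotaF
  rw [subst_coeff Polynomial.C hn' (wg_single _)]
  split_ifs with hd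
  · obtain ⟨c, rfl⟩ := hd
    rw [Int.mul_ediv_cancel_left _ (by exact_mod_cast hn.ne')]
    rw [finsum_eq_single _ c ?_]
    · rw [zpow'_single, HahnSeries.coeff_single_same, mul_one]
    · intro i hi
      rw [zpow'_single, HahnSeries.coeff_single, if_neg, mul_zero]
      intro h
      exact hi (mul_left_cancel₀ (by exact_mod_cast hn.ne') h).symm
  · apply finsum_eq_zero_of_forall_eq_zero
    intro i
    rw [zpow'_single, HahnSeries.coeff_single, if_neg (fun h => hd ⟨i, h⟩), mul_zero]

lemma iotaF_coeff_C {n : ℕ} (hn : 0 < n) (x : LaurentSeries A') (k : ℤ) :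
    ∃ a, (iotaF A' n x).coeff k = Polynomial.C a := by
  rw [iotaF_coeff hn]
  split_ifs
  exacts [⟨_, rfl⟩, ⟨0, (map_zero _).symm⟩]

lemma map_zpow' (T : LaurentSeries R →+* LaurentSeries S) {w : LaurentSeries R}
    (hu : IsUnit w) (i : ℤ) : T (zpow' w i) = zpow' (T w) i := by
  unfold zpow'
  split_ifs with hi
  · exact map_pow T w i.toNat
  · rw [map_pow]
    congr 1
    obtain ⟨u, rfl⟩ := hu
    have h1 : T ↑u = ↑(Units.map (T : LaurentSeries R →* LaurentSeries S) u) := rfl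
    rw [Ring.inverse_unit, h1, Ring.inverse_unit,
      ← map_inv (Units.map (T : LaurentSeries R →* LaurentSeries S)) u, Units.coe_map]
    rfl

lemma single_neg' (a : ℤ) (r : R) : HahnSeries.single a (-r) = -HahnSeries.single a r := by
  ext k
  rw [HahnSeries.coeff_neg, HahnSeries.coeff_single, HahnSeries.coeff_single]
  split_ifs <;> simp

lemma wS_eq_unit (n m : ℤ) (hm : 1 ≤ m) :
    (HahnSeries.single n 1 + HahnSeries.single (n + m) (Polynomial.X : Polynomial A')
      : LaurentSeries (Polynomial A'))
      = ((wUnit n m hm (-Polynomial.X) : (LaurentSeries (Polynomial A'))ˣ) :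
          LaurentSeries (Polynomial A')) := by
  show _ = HahnSeries.single n 1 - HahnSeries.single (n + m) (-Polynomial.X)
  rw [single_neg', sub_neg_eq_add]

lemma wS_isUnit (n m : ℤ) (hm : 1 ≤ m) :
    IsUnit (HahnSeries.single n 1 + HahnSeries.single (n + m) (Polynomial.X : Polynomial A')
      : LaurentSeries (Polynomial A')) :=
  ⟨wUnit n m hm (-Polynomial.X), (wS_eq_unit n m hm).symm⟩

lemma wS_wg (n m : ℤ) (hm : 1 ≤ m) :
    WG (HahnSeries.single n 1 + HahnSeries.single (n + m) (Polynomial.X : Polynomial A')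
      : LaurentSeries (Polynomial A')) n := by
  rw [wS_eq_unit n m hm]
  exact wg_of_unit _ (wUnit_val_vbelow n m hm _) (wUnit_inv_vbelow n m hm _)

lemma exists_lb (y : LaurentSeries R) : ∃ b : ℤ, ∀ k : ℤ, k < b → y.coeff k = 0 := by
  refine ⟨y.order, fun k hk => ?_⟩
  by_contra h
  exact absurd (HahnSeries.order_le_of_coeff_ne_zero h) (by omega)

lemma mul_coeff_superset {x y : LaurentSeries R} {s t : Set ℤ} (hs : s.IsPWO) (ht : t.IsPWO)
    (hxs : x.support ⊆ s) (hyt : y.support ⊆ t) (a : ℤ) :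
    (x * y).coeff a = ∑ ij ∈ Finset.antidiagonal hs ht a, x.coeff ij.1 * y.coeff ij.2 := by
  rw [HahnSeries.coeff_mul]
  apply Finset.sum_subset
  · intro ij hij
    rw [Finset.mem_addAntidiagonal] at hij ⊢
    exact ⟨hxs hij.1, hyt hij.2.1, hij.2.2⟩
  · intro ij hij hnij
    by_cases h1 : x.coeff ij.1 = 0
    · rw [h1, zero_mul]
    · have h2 : y.coeff ij.2 = 0 := by
        by_contra h2
        rw [Finset.mem_addAntidiagonal] at hij hnij
        exact hnij ⟨h1, h2, hij.2.2⟩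
      rw [h2, mul_zero]

/-- The coefficient function of `ψ_d(y)`, where `ψ_d : u ↦ u s^d`. -/
def psiF (d : ℕ) (y : LaurentSeries (Polynomial A')) (k : ℤ) : Polynomial A' :=
  ∑ᶠ l : ℕ, Polynomial.monomial l ((y.coeff (k - (l : ℤ) * d)).coeff l)

lemma psiF_support_finite (d : ℕ) (hd : 1 ≤ d) (y : LaurentSeries (Polynomial A')) (k : ℤ) :
    (Function.support fun l : ℕ =>
      Polynomial.monomial l ((y.coeff (k - (l : ℤ) * d)).coeff l)).Finite := by
  obtain ⟨b, hb⟩ := exists_lb y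
  apply Set.Finite.subset (Set.finite_Iic (k - b).toNat)
  intro l hl
  rw [Function.mem_support] at hl
  have h1 : y.coeff (k - (l : ℤ) * d) ≠ 0 := fun h => hl (by rw [h]; simp)
  have h2 : b ≤ k - (l : ℤ) * d := by
    by_contra h
    exact h1 (hb _ (by omega))
  have h3 : (l : ℤ) ≤ (l : ℤ) * d :=
    le_mul_of_one_le_right (by positivity) (by exact_mod_cast hd)
  have h4 : (l : ℤ) ≤ k - b := by linarith
  simp only [Set.mem_Iic]
  omega

lemma psiF_coeff (d : ℕ) (hd : 1 ≤ d) (y : LaurentSeries (Polynomial A')) (k : ℤ) (l : ℕ) :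
    (psiF d y k).coeff l = (y.coeff (k - (l : ℤ) * d)).coeff l := by
  unfold psiF
  have hmf := (Polynomial.lcoeff A' l).toAddMonoidHom.map_finsum (psiF_support_finite d hd y k)
  simp only [LinearMap.toAddMonoidHom_coe, Polynomial.lcoeff_apply] at hmf
  rw [hmf, finsum_eq_single _ l]
  · rw [Polynomial.coeff_monomial, if_pos rfl]
  · intro l' hl'
    rw [Polynomial.coeff_monomial, if_neg hl']

lemma psiMk_coeff (d : ℕ) (hd : 1 ≤ d) (y : LaurentSeries (Polynomial A')) (k : ℤ) :
    (mkL (psiF d y)).coeff k = psiF d y k := by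
  rw [mkL_coeff]
  apply isPWO_of_bddBelow
  obtain ⟨b, hb⟩ := exists_lb y
  refine ⟨b, fun k' hk' => ?_⟩
  rw [Function.mem_support] at hk'
  by_contra hbk
  push_neg at hbk
  apply hk'
  unfold psiF
  apply finsum_eq_zero_of_forall_eq_zero
  intro l
  have h0 : (0 : ℤ) ≤ (l : ℤ) * d := by positivity
  rw [hb _ (by omega)]
  simp

/-- The ring endomorphism `ψ_d : u ↦ u s^d` of `(A[u])((s))`. -/
def psiRH (d : ℕ) (hd : 1 ≤ d) :
    LaurentSeries (Polynomial A') →+* LaurentSeries (Polynomial A') where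
  toFun y := mkL (psiF d y)
  map_zero' := by
    apply mkL_eq
    intro k
    rw [HahnSeries.coeff_zero]
    apply finsum_eq_zero_of_forall_eq_zero
    intro l
    simp
  map_one' := by
    apply mkL_eq
    intro k
    apply Polynomial.ext
    intro l
    rw [psiF_coeff d hd, HahnSeries.coeff_one, HahnSeries.coeff_one]
    rcases Nat.eq_zero_or_pos l with rfl | hl
    · simp only [Nat.cast_zero, zero_mul, sub_zero]
      by_cases h : k = 0 <;> simp [h]
    · split_ifs <;> simp [Polynomial.coeff_one, hl.ne']
  map_add' := fun x y => by
    apply mkL_eq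
    intro k
    rw [HahnSeries.coeff_add, psiMk_coeff d hd, psiMk_coeff d hd]
    unfold psiF
    rw [← finsum_add_distrib (psiF_support_finite d hd x k) (psiF_support_finite d hd y k)]
    apply finsum_congr
    intro l
    rw [HahnSeries.coeff_add, Polynomial.coeff_add, map_add]
  map_mul' := fun x y => by
    apply mkL_eq
    intro k
    obtain ⟨bx, hbx⟩ := exists_lb x
    obtain ⟨by', hby⟩ := exists_lb y
    have hsx : (Set.Ici bx).IsPWO := isPWO_of_bddBelow _ ⟨bx, fun a ha => ha⟩
    have hsy : (Set.Ici by').IsPWO := isPWO_of_bddBelow _ ⟨by', fun a ha => ha⟩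
    have hsupx : x.support ⊆ Set.Ici bx := by
      intro a ha
      rw [HahnSeries.mem_support] at ha
      by_contra h
      exact ha (hbx a (by simpa using h))
    have hsupy : y.support ⊆ Set.Ici by' := by
      intro a ha
      rw [HahnSeries.mem_support] at ha
      by_contra h
      exact ha (hby a (by simpa using h))
    have hsuppx : (mkL (psiF d x)).support ⊆ Set.Ici bx := by
      intro a ha
      rw [HahnSeries.mem_support, psiMk_coeff d hd] at ha
      by_contra h
      apply ha
      unfold psiF
      apply finsum_eq_zero_of_forall_eq_zero
      intro l
      have h0 : (0 : ℤ) ≤ (l : ℤ) * d := by positivity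
      rw [hbx _ (by simp only [Set.mem_Ici] at h; omega)]
      simp
    have hsuppy : (mkL (psiF d y)).support ⊆ Set.Ici by' := by
      intro a ha
      rw [HahnSeries.mem_support, psiMk_coeff d hd] at ha
      by_contra h
      apply ha
      unfold psiF
      apply finsum_eq_zero_of_forall_eq_zero
      intro l
      have h0 : (0 : ℤ) ≤ (l : ℤ) * d := by positivity
      rw [hby _ (by simp only [Set.mem_Ici] at h; omega)]
      simp
    apply Polynomial.ext
    intro l
    have eL : (psiF d (x * y) k).coeff l
        = ∑ ij ∈ Finset.antidiagonal hsx hsy (k - (l : ℤ) * d),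
            ∑ p ∈ Finset.HasAntidiagonal.antidiagonal l,
              (x.coeff ij.1).coeff p.1 * (y.coeff ij.2).coeff p.2 := by
      rw [psiF_coeff d hd, mul_coeff_superset hsx hsy hsupx hsupy,
        Polynomial.finset_sum_coeff]
      apply Finset.sum_congr rfl
      intro ij _
      rw [Polynomial.coeff_mul]
    have eR : ((mkL (psiF d x) * mkL (psiF d y)).coeff k).coeff l
        = ∑ ij ∈ Finset.antidiagonal hsx hsy k,
            ∑ p ∈ Finset.HasAntidiagonal.antidiagonal l,
              (x.coeff (ij.1 - (p.1 : ℤ) * d)).coeff p.1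
                * (y.coeff (ij.2 - (p.2 : ℤ) * d)).coeff p.2 := by
      rw [mul_coeff_superset hsx hsy hsuppx hsuppy, Polynomial.finset_sum_coeff]
      apply Finset.sum_congr rfl
      intro ij _
      rw [psiMk_coeff d hd, psiMk_coeff d hd, Polynomial.coeff_mul]
      apply Finset.sum_congr rfl
      intro p _
      rw [psiF_coeff d hd, psiF_coeff d hd]
    rw [eL, eR, ← Finset.sum_product', ← Finset.sum_product']
    refine Finset.sum_bij_ne_zero
      (i := fun z _ _ => ((z.1.1 + (z.2.1 : ℤ) * d, z.1.2 + (z.2.2 : ℤ) * d), z.2))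
      ?_ ?_ ?_ ?_
    · rintro ⟨⟨i1, j1⟩, ⟨p1, p2⟩⟩ hmem hne
      rw [Finset.mem_product, Finset.mem_addAntidiagonal, Finset.HasAntidiagonal.mem_antidiagonal] at hmem
      rw [Finset.mem_product, Finset.mem_addAntidiagonal, Finset.HasAntidiagonal.mem_antidiagonal]
      obtain ⟨⟨hi1, hj1, hsum⟩, hp⟩ := hmem
      dsimp only at hi1 hj1 hsum hp ⊢
      refine ⟨⟨?_, ?_, ?_⟩, hp⟩
      · simp only [Set.mem_Ici] at hi1 ⊢
        have : (0 : ℤ) ≤ (p1 : ℤ) * d := by positivity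
        omega
      · simp only [Set.mem_Ici] at hj1 ⊢
        have : (0 : ℤ) ≤ (p2 : ℤ) * d := by positivity
        omega
      · have hp' : (p1 : ℤ) + (p2 : ℤ) = (l : ℤ) := by exact_mod_cast hp
        have : (p1 : ℤ) * d + (p2 : ℤ) * d = (l : ℤ) * d := by
          rw [← add_mul, hp']
        linarith
    · rintro ⟨⟨i1, j1⟩, ⟨p1, p2⟩⟩ h1m h1n ⟨⟨i2, j2⟩, ⟨q1, q2⟩⟩ h2m h2n heq
      simp only [Prod.mk.injEq] at heq
      obtain ⟨⟨e1, e2⟩, e3, e4⟩ := heq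
      subst e3; subst e4
      have f1 : i1 = i2 := by linarith
      have f2 : j1 = j2 := by linarith
      subst f1; subst f2; rfl
    · rintro ⟨⟨c, e⟩, ⟨p1, p2⟩⟩ hmem hne
      rw [Finset.mem_product, Finset.mem_addAntidiagonal, Finset.HasAntidiagonal.mem_antidiagonal] at hmem
      obtain ⟨⟨hc, he, hsum⟩, hp⟩ := hmem
      dsimp only at hc he hsum hp
      have hx1 : (x.coeff (c - (p1 : ℤ) * d)).coeff p1 ≠ 0 := by
        intro h
        exact hne (by rw [h, zero_mul])
      have hy1 : (y.coeff (e - (p2 : ℤ) * d)).coeff p2 ≠ 0 := by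
        intro h
        exact hne (by rw [h, mul_zero])
      have hx2 : c - (p1 : ℤ) * d ∈ Set.Ici bx := by
        apply hsupx
        rw [HahnSeries.mem_support]
        intro h
        exact hx1 (by rw [h]; simp)
      have hy2 : e - (p2 : ℤ) * d ∈ Set.Ici by' := by
        apply hsupy
        rw [HahnSeries.mem_support]
        intro h
        exact hy1 (by rw [h]; simp)
      refine ⟨⟨⟨c - (p1 : ℤ) * d, e - (p2 : ℤ) * d⟩, ⟨p1, p2⟩⟩, ?_, ?_, ?_⟩
      · rw [Finset.mem_product, Finset.mem_addAntidiagonal, Finset.HasAntidiagonal.mem_antidiagonal]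
        dsimp only
        refine ⟨⟨hx2, hy2, ?_⟩, hp⟩
        have hp' : (p1 : ℤ) + (p2 : ℤ) = (l : ℤ) := by exact_mod_cast hp
        have : (p1 : ℤ) * d + (p2 : ℤ) * d = (l : ℤ) * d := by rw [← add_mul, hp']
        linarith
      · dsimp only
        exact hne
      · dsimp only
        simp [sub_add_cancel]
    · rintro ⟨⟨i1, j1⟩, ⟨p1, p2⟩⟩ hmem hne
      simp only [add_sub_cancel_right]

lemma psiRH_coeff (d : ℕ) (hd : 1 ≤ d) (y : LaurentSeries (Polynomial A')) (k : ℤ) (l : ℕ) :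
    ((psiRH d hd y).coeff k).coeff l = (y.coeff (k - (l : ℤ) * d)).coeff l := by
  show ((mkL (psiF d y)).coeff k).coeff l = _
  rw [psiMk_coeff d hd, psiF_coeff d hd]

lemma psiRH_fix (d : ℕ) (hd : 1 ≤ d) {y : LaurentSeries (Polynomial A')}
    (h : ∀ j : ℤ, ∃ a, y.coeff j = Polynomial.C a) : psiRH d hd y = y := by
  ext k l
  rw [psiRH_coeff]
  rcases Nat.eq_zero_or_pos l with rfl | hl
  · simp
  · obtain ⟨a1, e1⟩ := h (k - (l : ℤ) * d)
    obtain ⟨a2, e2⟩ := h k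
    rw [e1, e2, Polynomial.coeff_C, Polynomial.coeff_C, if_neg (by omega), if_neg (by omega)]

lemma psiRH_wS (d : ℕ) (hd : 1 ≤ d) (n m : ℤ) :
    psiRH (A' := A') d hd
        (HahnSeries.single n 1 + HahnSeries.single (n + m) Polynomial.X)
      = HahnSeries.single n 1 + HahnSeries.single (n + m + d) Polynomial.X := by
  ext k l
  rw [psiRH_coeff, HahnSeries.coeff_add, HahnSeries.coeff_add, HahnSeries.coeff_single,
    HahnSeries.coeff_single, HahnSeries.coeff_single, HahnSeries.coeff_single]
  match l with
  | 0 =>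
      simp only [Nat.cast_zero, zero_mul, sub_zero]
      split_ifs <;> simp_all
  | 1 =>
      simp only [Nat.cast_one, one_mul]
      split_ifs <;> simp_all [Polynomial.coeff_one] <;> omega
  | (l + 2) =>
      split_ifs <;>
        simp [Polynomial.coeff_one, Polynomial.coeff_X,
          (by omega : l + 2 ≠ 0), (by omega : l + 2 ≠ 1)]

lemma sigmaF_coeff (m n : ℕ) (hm : 1 ≤ m) (hn : 1 ≤ n) (x : LaurentSeries A') (k : ℤ) :
    (sigmaF A' m n x).coeff k = ∑ᶠ i : ℤ, Polynomial.C (x.coeff i) *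
      (zpow' (HahnSeries.single (n : ℤ) 1
        + HahnSeries.single ((n : ℤ) + (m : ℤ)) Polynomial.X) i).coeff k := by
  unfold sigmaF
  exact subst_coeff _ (by exact_mod_cast hn) (wS_wg _ _ (by exact_mod_cast hm)) x k

lemma sigmaF_support_finite (m n : ℕ) (hm : 1 ≤ m) (hn : 1 ≤ n) (x : LaurentSeries A')
    (k : ℤ) :
    (Function.support fun i : ℤ => Polynomial.C (x.coeff i) *
      (zpow' (HahnSeries.single (n : ℤ) 1
        + HahnSeries.single ((n : ℤ) + (m : ℤ)) Polynomial.X) i).coeff k).Finite :=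
  subst_support_finite _ (by exact_mod_cast hn) (wS_wg _ _ (by exact_mod_cast hm)) x k

lemma psi_sigmaF (d : ℕ) (hd : 1 ≤ d) (m n : ℕ) (hm : 1 ≤ m) (hn : 1 ≤ n)
    (x : LaurentSeries A') :
    psiRH d hd (sigmaF A' m n x) = sigmaF A' (m + d) n x := by
  have hm' : (1 : ℤ) ≤ (m : ℤ) := by exact_mod_cast hm
  ext k l
  have hLf := (Polynomial.lcoeff A' l).toAddMonoidHom.map_finsum
      (sigmaF_support_finite m n hm hn x (k - (l : ℤ) * d))
  have hRf := (Polynomial.lcoeff A' l).toAddMonoidHom.map_finsum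
      (sigmaF_support_finite (m + d) n (by omega) hn x k)
  simp only [LinearMap.toAddMonoidHom_coe, Polynomial.lcoeff_apply] at hLf hRf
  rw [psiRH_coeff, sigmaF_coeff m n hm hn, sigmaF_coeff (m + d) n (by omega) hn, hLf, hRf]
  apply finsum_congr
  intro i
  rw [Polynomial.coeff_C_mul, Polynomial.coeff_C_mul]
  congr 1
  have h2 := map_zpow' (psiRH (A' := A') d hd)
    (wS_isUnit (n : ℤ) (m : ℤ) hm') i
  rw [psiRH_wS d hd] at h2
  have h3 := congrArg (fun z => (z.coeff k).coeff l) h2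
  rw [psiRH_coeff] at h3
  rw [h3]
  have hcast : (n : ℤ) + ((m + d : ℕ) : ℤ) = (n : ℤ) + (m : ℤ) + (d : ℤ) := by
    push_cast; ring
  rw [hcast]

lemma psi_iotaF (d : ℕ) (hd : 1 ≤ d) (n : ℕ) (hn : 0 < n) (x : LaurentSeries A') :
    psiRH d hd (iotaF A' n x) = iotaF A' n x :=
  psiRH_fix d hd (fun j => iotaF_coeff_C hn x j)

/-- Coefficientwise map of Laurent series along a ring homomorphism, as a ring hom. -/
def cmapRH (f : R →+* S) : LaurentSeries R →+* LaurentSeries S where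
  toFun x := x.map f
  map_zero' := by
    ext k
    simp [HahnSeries.map_coeff]
  map_one' := by
    ext k
    rw [HahnSeries.map_coeff, HahnSeries.coeff_one, HahnSeries.coeff_one]
    split_ifs <;> simp
  map_add' := fun x y => by
    ext k
    rw [HahnSeries.map_coeff, HahnSeries.coeff_add, HahnSeries.coeff_add,
      HahnSeries.map_coeff, HahnSeries.map_coeff, map_add]
  map_mul' := fun x y => by
    ext k
    rw [HahnSeries.map_coeff, HahnSeries.coeff_mul,
      mul_coeff_superset x.isPWO_support y.isPWO_support
        (fun a ha => by
          rw [HahnSeries.mem_support, HahnSeries.map_coeff] at ha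
          rw [HahnSeries.mem_support]
          intro h
          exact ha (by rw [h, map_zero]))
        (fun a ha => by
          rw [HahnSeries.mem_support, HahnSeries.map_coeff] at ha
          rw [HahnSeries.mem_support]
          intro h
          exact ha (by rw [h, map_zero])) k,
      map_sum]
    apply Finset.sum_congr rfl
    intro ij _
    rw [map_mul, HahnSeries.map_coeff, HahnSeries.map_coeff]

lemma cmapRH_coeff (f : R →+* S) (x : LaurentSeries R) (k : ℤ) :
    (cmapRH f x).coeff k = f (x.coeff k) := rfl

variable (A') in
/-- Evaluation of the polynomial variable `u` at `0`, as an endomorphism of `A[u]`. -/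
def ev0 : Polynomial A' →+* Polynomial A' :=
  Polynomial.C.comp (Polynomial.evalRingHom 0)

lemma ev0_C (a : A') : ev0 A' (Polynomial.C a) = Polynomial.C a := by
  simp [ev0]

lemma ev0_eq (p : Polynomial A') : ev0 A' p = Polynomial.C (p.coeff 0) := by
  simp [ev0, Polynomial.coeff_zero_eq_eval_zero]

lemma cmap_iotaF (n : ℕ) (hn : 0 < n) (x : LaurentSeries A') :
    cmapRH (ev0 A') (iotaF A' n x) = iotaF A' n x := by
  ext k
  rw [cmapRH_coeff]
  obtain ⟨a, ha⟩ := iotaF_coeff_C hn x k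
  rw [ha, ev0_C]

lemma cmap_wS (n m : ℤ) :
    cmapRH (ev0 A') (HahnSeries.single n 1 + HahnSeries.single (n + m) Polynomial.X)
      = HahnSeries.single n 1 := by
  refine HahnSeries.coeff_inj.mp (funext fun k => ?_)
  rw [cmapRH_coeff, HahnSeries.coeff_add, HahnSeries.coeff_single, HahnSeries.coeff_single]
  split_ifs <;> simp [ev0]

lemma cmap_sigmaF (m n : ℕ) (hm : 1 ≤ m) (hn : 1 ≤ n) (x : LaurentSeries A') :
    cmapRH (ev0 A') (sigmaF A' m n x) = iotaF A' n x := by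
  have hm' : (1 : ℤ) ≤ (m : ℤ) := by exact_mod_cast hm
  have hn' : (1 : ℤ) ≤ (n : ℤ) := by exact_mod_cast hn
  refine HahnSeries.coeff_inj.mp (funext fun k => ?_)
  rw [cmapRH_coeff, sigmaF_coeff m n hm hn]
  have hmf := (ev0 A').toAddMonoidHom.map_finsum (sigmaF_support_finite m n hm hn x k)
  simp only [RingHom.toAddMonoidHom_eq_coe, AddMonoidHom.coe_coe] at hmf
  rw [hmf]
  unfold iotaF
  rw [subst_coeff Polynomial.C hn' (wg_single _)]
  apply finsum_congr
  intro i
  rw [map_mul, ev0_C]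
  congr 1
  have h2 := map_zpow' (cmapRH (ev0 A')) (wS_isUnit (n : ℤ) (m : ℤ) hm') i
  rw [cmap_wS] at h2
  have h3 := congrArg (fun z => z.coeff k) h2
  simp only [cmapRH_coeff] at h3
  exact h3

/-- Rescaling `s ↦ s^c` as a ring endomorphism of Laurent series. -/
def embRH (c : ℕ) (hc : 0 < c) : LaurentSeries R →+* LaurentSeries R :=
  HahnSeries.embDomainRingHom (AddMonoidHom.mk' (fun k : ℤ => (c : ℤ) * k) (fun a b => by ring))
    (fun a b h => by
      change (c:ℤ) * a = (c:ℤ) * b at h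
      exact mul_left_cancel₀ (by exact_mod_cast hc.ne') h)
    (fun a b => by
      show (c:ℤ) * a ≤ (c:ℤ) * b ↔ a ≤ b
      constructor
      · intro h
        exact le_of_mul_le_mul_left h (by exact_mod_cast hc)
      · intro h
        exact mul_le_mul_of_nonneg_left h (by positivity))

lemma embRH_coeff_mul (c : ℕ) (hc : 0 < c) (x : LaurentSeries R) (k : ℤ) :
    (embRH c hc x).coeff ((c : ℤ) * k) = x.coeff k :=
  HahnSeries.embDomain_coeff

lemma embRH_coeff_nd (c : ℕ) (hc : 0 < c) (x : LaurentSeries R) (k : ℤ)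
    (h : ¬ (c : ℤ) ∣ k) : (embRH c hc x).coeff k = 0 := by
  apply HahnSeries.embDomain_notin_range
  rintro ⟨a, ha⟩
  exact h ⟨a, ha.symm⟩

lemma embRH_single (c : ℕ) (hc : 0 < c) (a : ℤ) (r : R) :
    embRH c hc (HahnSeries.single a r) = HahnSeries.single ((c : ℤ) * a) r :=
  HahnSeries.embDomain_single

lemma emb_iotaF (c : ℕ) (hc : 0 < c) (n : ℕ) (hn : 0 < n) (x : LaurentSeries A') :
    embRH c hc (iotaF A' n x) = iotaF A' (c * n) x := by
  have hcn : 0 < c * n := by positivity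
  ext k
  by_cases hdv : (c : ℤ) ∣ k
  · obtain ⟨k', rfl⟩ := hdv
    rw [embRH_coeff_mul c hc, iotaF_coeff hn, iotaF_coeff hcn]
    have hcast : ((c * n : ℕ) : ℤ) = (c : ℤ) * n := by push_cast; ring
    rw [hcast]
    by_cases h2 : (n : ℤ) ∣ k'
    · rw [if_pos h2, if_pos (mul_dvd_mul_left _ h2)]
      congr 1
      rw [Int.mul_ediv_mul_of_pos _ _ (by exact_mod_cast hc)]
    · rw [if_neg h2, if_neg]
      intro hcon
      apply h2
      obtain ⟨e, he⟩ := hcon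
      refine ⟨e, mul_left_cancel₀ (show (c:ℤ) ≠ 0 by exact_mod_cast hc.ne') ?_⟩
      rw [he]; ring
  · rw [embRH_coeff_nd c hc _ _ hdv, iotaF_coeff hcn, if_neg]
    intro hcon
    apply hdv
    refine dvd_trans ⟨(n : ℤ), by push_cast; ring⟩ hcon

lemma emb_sigmaF (c : ℕ) (hc : 0 < c) (m n : ℕ) (hm : 1 ≤ m) (hn : 1 ≤ n)
    (x : LaurentSeries A') :
    embRH c hc (sigmaF A' m n x) = sigmaF A' (c * m) (c * n) x := by
  have hm' : (1 : ℤ) ≤ (m : ℤ) := by exact_mod_cast hm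
  have hcm : 1 ≤ c * m := by
    have : 0 < c * m := by positivity
    omega
  have hcn : 1 ≤ c * n := by
    have : 0 < c * n := by positivity
    omega
  have h3 : embRH (R := Polynomial A') c hc
      (HahnSeries.single (n : ℤ) 1 + HahnSeries.single ((n : ℤ) + (m : ℤ)) Polynomial.X)
      = HahnSeries.single ((c * n : ℕ) : ℤ) 1
        + HahnSeries.single (((c * n : ℕ) : ℤ) + ((c * m : ℕ) : ℤ)) Polynomial.X := by
    rw [map_add, embRH_single, embRH_single]
    congr 2 <;> push_cast <;> ring
  have h2 : ∀ i : ℤ, embRH c hc (zpow'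
      (HahnSeries.single (n : ℤ) 1 + HahnSeries.single ((n : ℤ) + (m : ℤ))
        (Polynomial.X : Polynomial A')) i)
      = zpow' (HahnSeries.single ((c * n : ℕ) : ℤ) 1
        + HahnSeries.single (((c * n : ℕ) : ℤ) + ((c * m : ℕ) : ℤ)) Polynomial.X) i := by
    intro i
    rw [map_zpow' _ (wS_isUnit (n : ℤ) (m : ℤ) hm'), h3]
  refine HahnSeries.coeff_inj.mp (funext fun k => ?_)
  rw [sigmaF_coeff (c * m) (c * n) hcm hcn]
  by_cases hdv : (c : ℤ) ∣ k
  · obtain ⟨k', rfl⟩ := hdv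
    rw [embRH_coeff_mul c hc, sigmaF_coeff m n hm hn]
    apply finsum_congr
    intro i
    congr 1
    have := congrArg (fun z => z.coeff ((c : ℤ) * k')) (h2 i)
    rw [embRH_coeff_mul c hc] at this
    exact this
  · rw [embRH_coeff_nd c hc _ _ hdv]
    symm
    apply finsum_eq_zero_of_forall_eq_zero
    intro i
    have := congrArg (fun z => z.coeff k) (h2 i)
    rw [embRH_coeff_nd c hc _ _ hdv] at this
    rw [← this, mul_zero]

section MatrixAux

variable {N' : ℕ}

/-- `ι_n` as a ring homomorphism. -/
def iotaRH (n : ℕ) (hn : 0 < n) : LaurentSeries A' →+* LaurentSeries (Polynomial A') :=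
  (embRH n hn).comp (cmapRH Polynomial.C)

lemma iotaF_eq_iotaRH (n : ℕ) (hn : 0 < n) (x : LaurentSeries A') :
    iotaF A' n x = iotaRH n hn x := by
  refine HahnSeries.coeff_inj.mp (funext fun k => ?_)
  rw [iotaF_coeff hn]
  show _ = (embRH n hn (cmapRH Polynomial.C x)).coeff k
  by_cases hdv : (n : ℤ) ∣ k
  · obtain ⟨k', rfl⟩ := hdv
    rw [if_pos ⟨k', rfl⟩, embRH_coeff_mul n hn, cmapRH_coeff,
      Int.mul_ediv_cancel_left _ (by exact_mod_cast hn.ne')]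
  · rw [if_neg hdv, embRH_coeff_nd _ _ _ _ hdv]

lemma det_map_iota (g : Matrix (Fin N') (Fin N') (LaurentSeries A')) (hdet : g.det = 1)
    (n : ℕ) (hn : 0 < n) : IsUnit (g.map (iotaF A' n)).det := by
  have h1 : g.map (iotaF A' n) = g.map (iotaRH n hn) :=
    Matrix.ext fun i j => by
      rw [Matrix.map_apply, Matrix.map_apply]
      exact iotaF_eq_iotaRH n hn (g i j)
  rw [h1, ← RingHom.mapMatrix_apply, ← RingHom.map_det, hdet, map_one]
  exact isUnit_one

lemma iota_mul_hmat (g : Matrix (Fin N') (Fin N') (LaurentSeries A')) (hdet : g.det = 1)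
    (m n : ℕ) (hn : 0 < n) :
    g.map (iotaF A' n) * hmat g m n = g.map (sigmaF A' m n) := by
  unfold hmat
  rw [← Matrix.mul_assoc, Matrix.mul_nonsing_inv _ (det_map_iota g hdet n hn),
    Matrix.one_mul]

lemma hmat_cancel {g : Matrix (Fin N') (Fin N') (LaurentSeries A')} (hdet : g.det = 1)
    {n : ℕ} (hn : 0 < n)
    {X Y : Matrix (Fin N') (Fin N') (LaurentSeries (Polynomial A'))}
    (h : g.map (iotaF A' n) * X = g.map (iotaF A' n) * Y) : X = Y := by
  have h2 := congrArg (fun Z => (g.map (iotaF A' n))⁻¹ * Z) h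
  simpa [← Matrix.mul_assoc, Matrix.nonsing_inv_mul _ (det_map_iota g hdet n hn),
    Matrix.one_mul] using h2

lemma map_hmat (T : LaurentSeries (Polynomial A') →+* LaurentSeries (Polynomial A'))
    (g : Matrix (Fin N') (Fin N') (LaurentSeries A')) (hdet : g.det = 1)
    {m n m₂ n₂ : ℕ} (hn : 0 < n) (hn₂ : 0 < n₂)
    (hι : ∀ x, T (iotaF A' n x) = iotaF A' n₂ x)
    (hσ : ∀ x, T (sigmaF A' m n x) = sigmaF A' m₂ n₂ x) :
    (hmat g m n).map T = hmat g m₂ n₂ := by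
  apply hmat_cancel hdet hn₂
  rw [iota_mul_hmat g hdet m₂ n₂ hn₂]
  have h1 := congrArg (fun Z => Z.map (T : LaurentSeries (Polynomial A') →
      LaurentSeries (Polynomial A'))) (iota_mul_hmat g hdet m n hn)
  simp only [Matrix.map_mul (f := T)] at h1
  have e2 : (g.map (iotaF A' n)).map T = g.map (iotaF A' n₂) := by
    ext i j
    simp [Matrix.map_apply, hι]
  have e3 : (g.map (sigmaF A' m n)).map T = g.map (sigmaF A' m₂ n₂) := by
    ext i j
    simp [Matrix.map_apply, hσ]
  rw [e2, e3] at h1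
  exact h1

lemma hmat_ev0 (g : Matrix (Fin N') (Fin N') (LaurentSeries A')) (hdet : g.det = 1)
    (a ν : ℕ) (ha : 1 ≤ a) (hν : 1 ≤ ν) :
    (hmat g a ν).map (cmapRH (ev0 A')) = 1 := by
  apply hmat_cancel hdet hν
  rw [Matrix.mul_one]
  have h1 := congrArg (fun Z => Z.map (cmapRH (ev0 A') : LaurentSeries (Polynomial A') →
      LaurentSeries (Polynomial A'))) (iota_mul_hmat g hdet a ν hν)
  simp only [Matrix.map_mul (f := cmapRH (ev0 A'))] at h1
  have e2 : (g.map (iotaF A' ν)).map (cmapRH (ev0 A')) = g.map (iotaF A' ν) := by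
    ext i j
    simp [Matrix.map_apply, cmap_iotaF ν hν]
  have e3 : (g.map (sigmaF A' a ν)).map (cmapRH (ev0 A')) = g.map (iotaF A' ν) := by
    ext i j
    simp [Matrix.map_apply, cmap_sigmaF a ν ha hν]
  rw [e2, e3] at h1
  exact h1

lemma core_congr (g : Matrix (Fin N') (Fin N') (LaurentSeries A')) (hdet : g.det = 1)
    (a ν : ℕ) (ha : 1 ≤ a) (hν : 1 ≤ ν) (hPS : ∀ i j, IsPS (hmat g a ν i j))
    (d : ℕ) (hd : 1 ≤ d) :
    ∀ i j (k : ℤ), k < (d : ℤ) → ((hmat g (a + d) ν - 1) i j).coeff k = 0 := by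
  have hmap : (hmat g a ν).map (psiRH d hd) = hmat g (a + d) ν :=
    map_hmat (psiRH d hd) g hdet hν hν (fun x => psi_iotaF d hd ν hν x)
      (fun x => psi_sigmaF d hd a ν ha hν x)
  have hE := hmat_ev0 g hdet a ν ha hν
  intro i j k hk
  have hsub : (hmat g (a + d) ν - 1) i j
      = psiRH d hd (hmat g a ν i j)
        - (1 : Matrix (Fin N') (Fin N') (LaurentSeries (Polynomial A'))) i j := by
    rw [← hmap]
    simp [Matrix.sub_apply, Matrix.map_apply]
  rw [hsub, HahnSeries.coeff_sub, sub_eq_zero]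
  have hEij : ev0 A' ((hmat g a ν i j).coeff k)
      = ((1 : Matrix (Fin N') (Fin N') (LaurentSeries (Polynomial A'))) i j).coeff k := by
    have h5 := congrArg (fun Z => (Z i j).coeff k) hE
    simpa [Matrix.map_apply, cmapRH_coeff] using h5
  apply Polynomial.ext
  intro l
  rw [psiRH_coeff]
  rcases Nat.eq_zero_or_pos l with rfl | hl
  · simp only [Nat.cast_zero, zero_mul, sub_zero]
    have h6 := congrArg (fun p => p.coeff 0) hEij
    simp only [ev0_eq, Polynomial.coeff_C_zero] at h6
    exact h6
  · have hld : (d : ℤ) ≤ (l : ℤ) * d := by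
      have h7 : (1 : ℤ) ≤ (l : ℤ) := by exact_mod_cast hl
      nlinarith
    have hneg : k - (l : ℤ) * d < 0 := by omega
    rw [hPS i j _ hneg, Polynomial.coeff_zero]
    symm
    by_cases hij : i = j
    · subst hij
      rw [Matrix.one_apply_eq, HahnSeries.coeff_one]
      split_ifs <;> simp [Polynomial.coeff_one, hl.ne']
    · rw [Matrix.one_apply_ne hij]
      simp

end MatrixAux

end Statement4Aux

/-- If `g ∉ SL_N(A[[t]])` has index `r(g) = m/n` in lowest terms and
`M ≥ 1`, then for every `m' ≥ m + M` the entries of `ι_n(g)⁻¹ σ_{m',n}(g) - I` lie in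
`s^M (A[u])[[s]]`. -/
theorem statement4 {A : Type*} [CommRing A] {N : ℕ} (hN : 1 ≤ N)
    (g : Matrix (Fin N) (Fin N) (LaurentSeries A)) (hdet : g.det = 1)
    (hg : ¬ ∀ i j, IsPS (g i j))
    (m n : ℕ) (hn : 0 < n) (hcop : Nat.Coprime m n)
    (hidx : SigmaSet g = {q : ℚ | 0 < q ∧ (m : ℚ) / (n : ℚ) ≤ q})
    (M : ℕ) (hM : 1 ≤ M) :
    ∀ m' : ℕ, m + M ≤ m' → ∀ i j, ∀ k : ℤ, k < (M : ℤ) →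
      ((hmat g m' n - 1) i j).coeff k = 0 := by
  intro m' hm' i j k hk
  by_cases hm0 : m = 0
  · -- the index is `0`; use the base point `1/2 ∈ Σ(g)` and the rescaling `s ↦ s²`.
    subst hm0
    have hn1 : n = 1 := by simpa [Nat.coprime_zero_left] using hcop
    subst hn1
    have hm'1 : 1 ≤ m' := by omega
    have hq : ((1 : ℚ)/2) ∈ SigmaSet g := by
      rw [hidx]
      refine ⟨by norm_num, by norm_num⟩
    obtain ⟨-, hPS⟩ := hq
    have hnum : ((1 : ℚ)/2).num.toNat = 1 := by norm_num
    have hden : ((1 : ℚ)/2).den = 2 := by norm_num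
    rw [hnum, hden] at hPS
    have hcore := core_congr g hdet 1 2 le_rfl (by omega) hPS (2*m' - 1) (by omega)
    have h12 : 1 + (2*m' - 1) = 2*m' := by omega
    rw [h12] at hcore
    have hemb : (hmat g m' 1).map (embRH 2 (by omega)) = hmat g (2*m') 2 :=
      map_hmat (embRH (R := Polynomial A) 2 (by omega)) g hdet
        (m := m') (n := 1) (m₂ := 2*m') (n₂ := 2) (by omega) (by omega)
        (fun x => by
          have h := emb_iotaF (A' := A) 2 (by omega) 1 (by omega) x
          rw [show 2*1 = 2 from rfl] at h
          exact h)
        (fun x => by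
          have h := emb_sigmaF (A' := A) 2 (by omega) m' 1 hm'1 le_rfl x
          rw [show 2*1 = 2 from rfl] at h
          exact h)
    have h2k := hcore i j (2*k) (by omega)
    have hentry : hmat g (2*m') 2 i j = embRH 2 (by omega) (hmat g m' 1 i j) := by
      rw [← hemb, Matrix.map_apply]
    rw [Matrix.sub_apply, HahnSeries.coeff_sub, hentry] at h2k
    rw [Matrix.sub_apply, HahnSeries.coeff_sub]
    have e1 : (embRH (R := Polynomial A) 2 (by omega) (hmat g m' 1 i j)).coeff (2*k)
        = (hmat g m' 1 i j).coeff k := by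
      have h8 := embRH_coeff_mul (R := Polynomial A) 2 (by omega) (hmat g m' 1 i j) k
      rw [show ((2:ℕ):ℤ) * k = 2*k from by push_cast; ring] at h8
      exact h8
    rw [e1] at h2k
    have e2 : ((1 : Matrix (Fin N) (Fin N) (LaurentSeries (Polynomial A))) i j).coeff (2*k)
        = ((1 : Matrix (Fin N) (Fin N) (LaurentSeries (Polynomial A))) i j).coeff k := by
      by_cases hij : i = j
      · subst hij
        rw [Matrix.one_apply_eq, HahnSeries.coeff_one, HahnSeries.coeff_one]
        by_cases hk0 : k = 0
        · subst hk0; norm_num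
        · rw [if_neg (by omega), if_neg hk0]
      · rw [Matrix.one_apply_ne hij]
        simp
    rw [e2] at h2k
    exact h2k
  · -- the index is positive: use the base point `m/n ∈ Σ(g)` directly.
    have hm1 : 1 ≤ m := by omega
    have hq : ((m : ℚ)/(n : ℚ)) ∈ SigmaSet g := by
      rw [hidx]
      refine ⟨?_, le_refl _⟩
      have h1 : 0 < (m:ℚ) := by exact_mod_cast hm1
      have h2 : 0 < (n:ℚ) := by exact_mod_cast hn
      positivity
    have heq : ((m : ℚ)/(n : ℚ))
        = Rat.mk' (m : ℤ) n (by omega) (by simpa using hcop) := by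
      rw [Rat.mk_eq_divInt, Rat.divInt_eq_div]
      push_cast
      ring
    obtain ⟨-, hPS⟩ := hq
    rw [heq] at hPS
    have hPS' : ∀ i j, IsPS (hmat g m n i j) := by
      intro i' j'
      have h9 := hPS i' j'
      simpa using h9
    have hcore := core_congr g hdet m n hm1 hn hPS' (m' - m) (by omega)
    have h12 : m + (m' - m) = m' := by omega
    rw [h12] at hcore
    exact hcore i j k (by omega)

end ResidueIndex

end
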